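/- Suppose A_λ = M_λ + E_λ are linear operators on functions ℤ^d → ℂ (for a parameter λ ≥ 1) satisfying, with constants C and exponents α, β, γ > 0 uniform in λ: (i) ‖A_λ f‖_{ℓ^∞} ≤ C λ^{−α} ‖f‖_{ℓ^1}; (ii) ‖M_λ f‖_{ℓ^∞} ≤ C λ^{−β} ‖f‖_{ℓ^1}; (iii) ‖A_λ f‖_{ℓ^2} ≤ C ‖f‖_{ℓ^2}; (iv) ‖E_λ f‖_{ℓ^2} ≤ C λ^{−γ} ‖f‖_{ℓ^2}. If α < β, then for all 1 ≤ p ≤ 2, ‖A_λ f‖_{ℓ^{p'}} ≤ C' ( λ^{−β(2/p − 1)} + λ^{−[α(2/p − 1) + γ(2 − 2/p)]} ) ‖f‖_{ℓ^p}, where C' depends only on C (not on λ), and p' is the dual exponent 1/p + 1/p' = 1. -/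

import Mathlib

/-!
Both `M_λ` and `E_λ` obey an `ℓ¹ → ℓ^∞` and an `ℓ² → ℓ²` bound of the form `K λ^(-a)`: for `M_λ`
the `ℓ²` bound comes from (iii) and (iv), for `E_λ` the `ℓ¹ → ℓ^∞` bound from (i) and (ii) with
`α < β`. The theorem follows by interpolating each of them and adding.

The interpolation `‖T f‖_{p'} ≤ M₁^(2/p - 1) M₂^(2 - 2/p) ‖f‖_p` is proved by a real-variable
argument. Write `T` through its matrix `k y x = T δ_y x`. If `f` is finitely supported with
`B ≤ |f| ≤ 2B` on its support, Hölder's inequality `‖g‖_{p'} ≤ ‖g‖_∞^(1 - 2/p') ‖g‖₂^(2/p')`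
gives the bound up to a factor `2`; splitting a general `f` into dyadic level sets loses a further
factor `m`, the number of levels. The tensor power `k^⊗n` satisfies the endpoint bounds with
`M₁ⁿ, M₂ⁿ`, and `f^⊗n` has at most `n m` levels, so the `n`-th power of the inequality holds up to
the factor `2 n m`; taking `n`-th roots and `n → ∞` removes it. For `f` of infinite support, the
part outside a large finite set is small in `ℓ^p ⊆ ℓ²`, where `T` is bounded.
-/

open MeasureTheory ENNReal Filter Finset Topology

namespace ENNReal

theorem tsum_pi_prod_eq_pow {Y : Type*} (g : Y → ℝ≥0∞) (n : ℕ) :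
    ∑' x : Fin n → Y, ∏ i, g (x i) = (∑' y, g y) ^ n := by
  induction n with
  | zero => simp
  | succ n ih =>
    rw [← (Fin.consEquiv fun _ => Y).tsum_eq, pow_succ', ← ih, ← ENNReal.tsum_mul_right,
      ENNReal.tsum_prod']
    simp [Fin.prod_univ_succ, Fin.consEquiv, ENNReal.tsum_mul_left]

theorem pow_rpow_comm (x : ℝ≥0∞) (n : ℕ) (z : ℝ) : (x ^ n) ^ z = (x ^ z) ^ n := by
  rw [← rpow_natCast_mul, mul_comm, rpow_mul_natCast]

theorem le_of_forall_pow_le_mul_nat_mul_pow {x y A : ℝ≥0∞} (hA : A ≠ ∞)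
    (h : ∀ n : ℕ, 1 ≤ n → x ^ n ≤ A * n * y ^ n) : x ≤ y := by
  by_contra! hyx
  have hy : y ≠ ∞ := hyx.ne_top
  have hx : x ≠ ∞ := ne_top_of_le_ne_top (b := A * y) (by finiteness) (by simpa using h 1 le_rfl)
  have hy0 : 0 < y.toReal := by
    refine toReal_pos (fun hy0 => ?_) hy
    exact (zero_le.trans_lt hyx).ne' (by simpa [hy0] using h 1 le_rfl)
  set r := x.toReal / y.toReal
  have hr : 1 < r := (one_lt_div hy0).2 ((toReal_lt_toReal hy hx).2 hyx)
  have hpow (n : ℕ) (hn : 1 ≤ n) : r ^ n ≤ A.toReal * n := by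
    have := toReal_mono (by finiteness) (h n hn)
    rw [toReal_pow, toReal_mul, toReal_mul, toReal_pow, toReal_natCast] at this
    rw [div_pow, div_le_iff₀ (by positivity)]
    exact this
  obtain ⟨n, hn, hn1⟩ := ((tendsto_pow_const_div_const_pow_of_one_lt 1 hr).eventually
    (gt_mem_nhds (by positivity : (0 : ℝ) < 1 / (A.toReal + 1)))).and (eventually_ge_atTop 1)
    |>.exists
  rw [pow_one, div_lt_div_iff₀ (by positivity) (by positivity)] at hn
  nlinarith [hpow n hn1, (Nat.one_le_cast (α := ℝ)).2 hn1, toReal_nonneg (a := A)]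

end ENNReal

theorem Real.HolderConjugate.two_div_eq {p q : ℝ} (hpq : p.HolderConjugate q) :
    2 / q = 2 - 2 / p := by
  have := hpq.inv_add_inv_eq_one
  simp only [div_eq_mul_inv]
  linarith

theorem Real.HolderConjugate.two_le_of_le_two {p q : ℝ} (hpq : p.HolderConjugate q)
    (hp2 : p ≤ 2) : 2 ≤ q := by
  have h := one_div_le_one_div_of_le hpq.pos hp2
  have := hpq.one_div_add_one_div
  exact le_of_one_div_le_one_div hpq.symm.pos (by linarith)

namespace MeasureTheory

section Count

variable {X E : Type*} [MeasurableSpace X] [MeasurableSingletonClass X] [NormedAddCommGroup E]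

theorem eLpNorm_count_eq_tsum (f : X → E) {p : ℝ} (hp : 0 < p) :
    eLpNorm f (.ofReal p) Measure.count = (∑' x, ‖f x‖ₑ ^ p) ^ (1 / p) := by
  rw [eLpNorm_eq_lintegral_rpow_enorm_toReal (by simpa) ofReal_ne_top, lintegral_count,
    toReal_ofReal hp.le]

theorem eLpNorm_count_top_le (f : X → E) {p : ℝ≥0∞} (hp : p ≠ 0) :
    eLpNorm f ∞ Measure.count ≤ eLpNorm f p Measure.count := by
  rw [eLpNorm_exponent_top]
  exact eLpNormEssSup_le_of_ae_enorm_bound (.of_forall (enorm_le_eLpNorm_count f · hp))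

theorem eLpNorm_count_le_top_rpow_mul_rpow (f : X → E) {p q : ℝ} (hp : 0 < p) (hpq : p ≤ q) :
    eLpNorm f (.ofReal q) Measure.count ≤
      eLpNorm f ∞ Measure.count ^ (1 - p / q) * eLpNorm f (.ofReal p) Measure.count ^ (p / q) := by
  have hq : 0 < q := hp.trans_le hpq
  set S := eLpNorm f ∞ Measure.count
  have hsum : ∑' x, ‖f x‖ₑ ^ q ≤ S ^ (q - p) * ∑' x, ‖f x‖ₑ ^ p := by
    rw [← ENNReal.tsum_mul_left]
    gcongr with x
    calc ‖f x‖ₑ ^ q = ‖f x‖ₑ ^ (q - p) * ‖f x‖ₑ ^ p := by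
          rw [← ENNReal.rpow_add_of_nonneg _ _ (sub_nonneg.2 hpq) hp.le, sub_add_cancel]
      _ ≤ S ^ (q - p) * ‖f x‖ₑ ^ p := by
          gcongr
          exact enorm_le_eLpNorm_count f x top_ne_zero
  rw [eLpNorm_count_eq_tsum f hq, eLpNorm_count_eq_tsum f hp, ← ENNReal.rpow_mul]
  calc (∑' x, ‖f x‖ₑ ^ q) ^ (1 / q) ≤ (S ^ (q - p) * ∑' x, ‖f x‖ₑ ^ p) ^ (1 / q) := by
        gcongr
    _ = S ^ (1 - p / q) * (∑' x, ‖f x‖ₑ ^ p) ^ (1 / p * (p / q)) := by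
        rw [ENNReal.mul_rpow_of_nonneg _ _ (by positivity), ← ENNReal.rpow_mul]
        congr 2 <;> field_simp

theorem eLpNorm_count_le_of_exponent_le (f : X → E) {p q : ℝ≥0∞} (hp : p ≠ 0) (hpq : p ≤ q) :
    eLpNorm f q Measure.count ≤ eLpNorm f p Measure.count := by
  rcases eq_or_ne q ∞ with rfl | hq
  · exact eLpNorm_count_top_le f hp
  have hp' : p ≠ ∞ := (hpq.trans_lt hq.lt_top).ne
  have hp0 : 0 < p.toReal := toReal_pos hp hp'
  have hpq' : p.toReal ≤ q.toReal := toReal_mono hq hpq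
  have hθ : 0 ≤ 1 - p.toReal / q.toReal := sub_nonneg.2 (div_le_one_of_le₀ hpq' (by positivity))
  rw [← ofReal_toReal hq, ← ofReal_toReal hp']
  calc _ ≤ eLpNorm f ∞ Measure.count ^ (1 - p.toReal / q.toReal) *
        eLpNorm f (.ofReal p.toReal) Measure.count ^ (p.toReal / q.toReal) :=
        eLpNorm_count_le_top_rpow_mul_rpow f hp0 hpq'
    _ ≤ eLpNorm f (.ofReal p.toReal) Measure.count ^ (1 - p.toReal / q.toReal) *
        eLpNorm f (.ofReal p.toReal) Measure.count ^ (p.toReal / q.toReal) := by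
        gcongr
        exact eLpNorm_count_top_le f (by simpa using hp0)
    _ = eLpNorm f (.ofReal p.toReal) Measure.count := by
        rw [← ENNReal.rpow_add_of_nonneg _ _ hθ (by positivity), sub_add_cancel, rpow_one]

theorem eLpNorm_count_two_sq (f : X → E) :
    eLpNorm f 2 Measure.count ^ 2 = ∑' x, ‖f x‖ₑ ^ 2 := by
  have := eLpNorm_count_eq_tsum f two_pos
  simp only [ofReal_ofNat, rpow_two] at this
  rw [this, ← rpow_natCast, ← ENNReal.rpow_mul]
  norm_num

theorem tendsto_eLpNorm_count_indicator_compl {f : X → E} {p : ℝ≥0∞} (hp : p ≠ 0) (hp' : p ≠ ∞)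
    (hf : eLpNorm f p Measure.count ≠ ∞) :
    Tendsto (fun s : Finset X => eLpNorm ((s : Set X)ᶜ.indicator f) p Measure.count) atTop
      (𝓝 0) := by
  have hr : 0 < p.toReal := toReal_pos hp hp'
  rw [← ofReal_toReal hp'] at hf ⊢
  rw [eLpNorm_count_eq_tsum _ hr] at hf
  have hsum : ∑' x, ‖f x‖ₑ ^ p.toReal ≠ ∞ := by
    contrapose! hf; rw [hf, top_rpow_of_pos (by positivity)]
  have hcompl (s : Finset X) : eLpNorm ((s : Set X)ᶜ.indicator f) (.ofReal p.toReal) Measure.count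
      = (∑' x : {x // x ∉ s}, ‖f x‖ₑ ^ p.toReal) ^ (1 / p.toReal) := by
    have hsub : ∑' x : {x // x ∉ s}, ‖f x‖ₑ ^ p.toReal =
        ∑' x, {x | x ∉ s}.indicator (fun x => ‖f x‖ₑ ^ p.toReal) x :=
      _root_.tsum_subtype {x | x ∉ s} fun x => ‖f x‖ₑ ^ p.toReal
    rw [eLpNorm_count_eq_tsum _ hr, hsub]
    congr 1
    refine tsum_congr fun x => ?_
    by_cases hx : x ∈ s <;> simp [hx, zero_rpow_of_pos hr]
  simp_rw [hcompl]
  simpa [zero_rpow_of_pos (inv_pos.2 hr)] using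
    (ENNReal.tendsto_tsum_compl_atTop_zero hsum).ennrpow_const (1 / p.toReal)

end Count

theorem eLpNorm_count_pi_prod {Y 𝕜 : Type*} [MeasurableSpace Y] [MeasurableSingletonClass Y]
    [NormedField 𝕜] (g : Y → 𝕜) (n : ℕ) {q : ℝ} (hq : 0 < q) :
    eLpNorm (fun x : Fin n → Y => ∏ i, g (x i)) (.ofReal q) Measure.count =
      eLpNorm g (.ofReal q) Measure.count ^ n := by
  have hprod (x : Fin n → Y) : ‖∏ i, g (x i)‖ₑ ^ q = ∏ i, ‖g (x i)‖ₑ ^ q := by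
    simp [enorm_eq_nnnorm, nnnorm_prod, ENNReal.prod_rpow_of_nonneg hq.le]
  rw [eLpNorm_count_eq_tsum _ hq, eLpNorm_count_eq_tsum _ hq, tsum_congr hprod,
    ENNReal.tsum_pi_prod_eq_pow (fun y => ‖g y‖ₑ ^ q), pow_rpow_comm]

theorem eLpNorm_sub_le_ofReal_add_mul {α E : Type*} [MeasurableSpace α]
    {μ : Measure α} [NormedAddCommGroup E] {g₁ g₂ : α → E} (hg₁ : AEStronglyMeasurable g₁ μ)
    (hg₂ : AEStronglyMeasurable g₂ μ) {p : ℝ≥0∞} (hp : 1 ≤ p) {a b : ℝ} (ha : 0 ≤ a) (hb : 0 ≤ b)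
    {N : ℝ≥0∞} (h₁ : eLpNorm g₁ p μ ≤ ENNReal.ofReal a * N)
    (h₂ : eLpNorm g₂ p μ ≤ ENNReal.ofReal b * N) :
    eLpNorm (g₁ - g₂) p μ ≤ ENNReal.ofReal (a + b) * N := by
  rw [ofReal_add ha hb, add_mul]
  exact (eLpNorm_sub_le hg₁ hg₂ hp).trans (add_le_add h₁ h₂)

end MeasureTheory

namespace Interpolation

theorem card_rpow_mul_le {Y : Type*} {u : Finset Y} {a : Y → ℝ≥0∞} {B : ℝ≥0∞}
    (hB : ∀ y ∈ u, B ≤ a y) {p : ℝ} (hp : 0 < p) :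
    (#u : ℝ≥0∞) ^ (1 / p) * B ≤ (∑ y ∈ u, a y ^ p) ^ (1 / p) := by
  calc (#u : ℝ≥0∞) ^ (1 / p) * B = (#u * B ^ p) ^ (1 / p) := by
        rw [ENNReal.mul_rpow_of_nonneg _ _ (by positivity), ← ENNReal.rpow_mul,
          mul_one_div_cancel hp.ne', rpow_one]
    _ ≤ (∑ y ∈ u, a y ^ p) ^ (1 / p) := by
        gcongr
        rw [← nsmul_eq_mul]
        exact card_nsmul_le_sum _ _ _ fun y hy => by gcongr; exact hB y hy

theorem rpow_mul_rpow_card_bounds {M₁ M₂ N D : ℝ≥0∞} {p : ℝ} (hp1 : 1 ≤ p) (hp2 : p ≤ 2) :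
    (M₁ * (N * D)) ^ (2 / p - 1) * (M₂ * (N ^ (1 / 2 : ℝ) * D)) ^ (2 - 2 / p) =
      M₁ ^ (2 / p - 1) * M₂ ^ (2 - 2 / p) * (N ^ (1 / p) * D) := by
  have ht : 0 ≤ 2 / p - 1 := by rw [sub_nonneg, le_div_iff₀ (by linarith)]; linarith
  have hu : 0 ≤ 2 - 2 / p := by rw [sub_nonneg, div_le_iff₀ (by linarith)]; linarith
  have hN : N ^ (2 / p - 1) * (N ^ (1 / 2 : ℝ)) ^ (2 - 2 / p) = N ^ (1 / p) := by
    rw [← ENNReal.rpow_mul, ← ENNReal.rpow_add_of_nonneg _ _ ht (by positivity)]; congr 1; ring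
  have hD : D ^ (2 / p - 1) * D ^ (2 - 2 / p) = D := by
    rw [← ENNReal.rpow_add_of_nonneg _ _ ht hu]; norm_num
  simp only [ENNReal.mul_rpow_of_nonneg _ _ ht, ENNReal.mul_rpow_of_nonneg _ _ hu]
  calc _ = M₁ ^ (2 / p - 1) * M₂ ^ (2 - 2 / p) * (N ^ (2 / p - 1) * (N ^ (1 / 2 : ℝ)) ^ (2 - 2 / p))
        * (D ^ (2 / p - 1) * D ^ (2 - 2 / p)) := by ring
    _ = _ := by rw [hN, hD, mul_assoc]

theorem exists_zpow_bounds {Y : Type*} (s : Finset Y) (c : Y → ℂ) :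
    ∃ (a : ℤ) (m : ℕ), ∀ y ∈ s, c y ≠ 0 → (2 : ℝ) ^ a ≤ ‖c y‖ ∧ ‖c y‖ < 2 ^ (a + m) := by
  classical
  induction s using Finset.induction_on with
  | empty => exact ⟨0, 0, by simp⟩
  | insert y s _ ih =>
    obtain ⟨a, m, ham⟩ := ih
    by_cases hy : c y = 0
    · exact ⟨a, m, by simpa [hy] using ham⟩
    obtain ⟨b, hb₁, hb₂⟩ := exists_mem_Ico_zpow (norm_pos_iff.2 hy) one_lt_two
    refine ⟨min a b, (max (a + m) (b + 1) - min a b).toNat, ?_⟩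
    have htop : max (a + m) (b + 1) ≤ min a b + (max (a + m) (b + 1) - min a b).toNat := by omega
    simp only [mem_insert, forall_eq_or_imp]
    refine ⟨fun _ => ⟨?_, ?_⟩, fun z hz hz0 => ⟨?_, ?_⟩⟩
    · exact (zpow_le_zpow_right₀ one_le_two (min_le_right _ _)).trans hb₁
    · exact hb₂.trans_le (zpow_le_zpow_right₀ one_le_two ((le_max_right _ _).trans htop))
    · exact (zpow_le_zpow_right₀ one_le_two (min_le_left _ _)).trans (ham z hz hz0).1
    · exact (ham z hz hz0).2.trans_le
        (zpow_le_zpow_right₀ one_le_two ((le_max_left _ _).trans htop))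

theorem prod_mem_zpow_bounds {n : ℕ} (hn : n ≠ 0) {x : Fin n → ℝ} {a b : ℤ}
    (hx : ∀ i, (2 : ℝ) ^ a ≤ x i ∧ x i < 2 ^ b) :
    (2 : ℝ) ^ (n * a) ≤ ∏ i, x i ∧ ∏ i, x i < 2 ^ (n * b) := by
  have : Nonempty (Fin n) := ⟨⟨0, Nat.pos_of_ne_zero hn⟩⟩
  rw [mul_comm, zpow_mul, mul_comm, zpow_mul, zpow_natCast, zpow_natCast]
  constructor
  · simpa using prod_le_prod (s := univ) (fun i _ => by positivity) fun i _ => (hx i).1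
  · simpa using prod_lt_prod_of_nonempty (fun i _ => (zpow_pos two_pos a).trans_le (hx i).1)
      (fun i _ => (hx i).2) univ_nonempty

theorem enorm_mem_dyadic_level {z : ℂ} (hz : z ≠ 0) :
    ENNReal.ofReal (2 ^ Int.log 2 ‖z‖) ≤ ‖z‖ₑ ∧ ‖z‖ₑ ≤ 2 * ENNReal.ofReal (2 ^ Int.log 2 ‖z‖) := by
  have hz' : 0 < ‖z‖ := norm_pos_iff.2 hz
  have hlow : ((2 : ℕ) : ℝ) ^ Int.log 2 ‖z‖ ≤ ‖z‖ := Int.zpow_log_le_self one_lt_two hz'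
  have hup : ‖z‖ < ((2 : ℕ) : ℝ) ^ (Int.log 2 ‖z‖ + 1) := Int.lt_zpow_succ_log_self one_lt_two _
  push_cast at hlow hup
  rw [zpow_add_one₀ two_ne_zero] at hup
  rw [← ofReal_norm, ← ofReal_ofNat 2, ← ofReal_mul zero_le_two]
  exact ⟨ofReal_le_ofReal hlow, ofReal_le_ofReal (by linarith)⟩

theorem sum_piFinset_enorm_prod_rpow {Y : Type*} (s : Finset Y) (c : Y → ℂ) (n : ℕ) {p : ℝ}
    (hp : 0 < p) :
    (∑ y ∈ Fintype.piFinset fun _ : Fin n => s, ‖∏ i, c (y i)‖ₑ ^ p) ^ (1 / p) =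
      ((∑ y ∈ s, ‖c y‖ₑ ^ p) ^ (1 / p)) ^ n := by
  simp only [enorm_eq_nnnorm, nnnorm_prod, ofNNReal_finsetProd, ← ENNReal.prod_rpow_of_nonneg hp.le]
  rw [← prod_univ_sum (fun _ => s) (fun _ y => (‖c y‖₊ : ℝ≥0∞) ^ p), prod_const, card_univ,
    Fintype.card_fin, ENNReal.pow_rpow_comm]

theorem ofReal_mul_rpow_neg_rpow_mul_rpow {K lam a b t u : ℝ} (hK : 0 ≤ K) (hlam : 0 < lam)
    (ht : 0 ≤ t) (hu : 0 ≤ u) (htu : t + u = 1) :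
    ENNReal.ofReal (K * lam ^ (-a)) ^ t * ENNReal.ofReal (K * lam ^ (-b)) ^ u =
      ENNReal.ofReal (K * lam ^ (-(a * t + b * u))) := by
  rw [ofReal_rpow_of_nonneg (by positivity) ht, ofReal_rpow_of_nonneg (by positivity) hu,
    ← ofReal_mul (by positivity)]
  congr 1
  rw [Real.mul_rpow hK (by positivity), Real.mul_rpow hK (by positivity), ← Real.rpow_mul hlam.le,
    ← Real.rpow_mul hlam.le]
  calc K ^ t * lam ^ (-a * t) * (K ^ u * lam ^ (-b * u))
      = K ^ (t + u) * lam ^ (-a * t + -b * u) := by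
        rw [Real.rpow_add' hK (by rw [htu]; exact one_ne_zero), Real.rpow_add hlam]; ring
    _ = K * lam ^ (-(a * t + b * u)) := by rw [htu, Real.rpow_one]; ring_nf

section Kernel

variable {Y : Type*}

/- `EntriesLE k M` and `L2BoundedBy k M` bound the `ℓ¹ → ℓ^∞` and the `ℓ² → ℓ²` norm of the
action `c ↦ ∑ y ∈ s, c y • k y` of the matrix `k` on finitely supported vectors. -/

def vecMulOn (s : Finset Y) (c : Y → ℂ) (k : Y → Y → ℂ) (x : Y) : ℂ := ∑ y ∈ s, c y * k y x

def EntriesLE (k : Y → Y → ℂ) (M : ℝ≥0∞) : Prop := ∀ y x, ‖k y x‖ₑ ≤ M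

def L2BoundedBy (k : Y → Y → ℂ) (M : ℝ≥0∞) : Prop :=
  ∀ (s : Finset Y) (c : Y → ℂ), ∑' x, ‖vecMulOn s c k x‖ₑ ^ 2 ≤ M ^ 2 * ∑ y ∈ s, ‖c y‖ₑ ^ 2

def kron {A B : Type*} (k : A → A → ℂ) (l : B → B → ℂ) : A × B → A × B → ℂ :=
  fun y x => k y.1 x.1 * l y.2 x.2

def tensorPow (k : Y → Y → ℂ) (n : ℕ) : (Fin n → Y) → (Fin n → Y) → ℂ :=
  fun y x => ∏ i, k (y i) (x i)

theorem vecMulOn_indicator [DecidableEq Y] {s t : Finset Y} (hst : s ⊆ t) (c : Y → ℂ)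
    (k : Y → Y → ℂ) : vecMulOn t ((s : Set Y).indicator c) k = vecMulOn s c k := by
  funext x
  simp only [vecMulOn, ← Set.indicator_mul_left _ _ (fun y => k y x)]
  exact sum_indicator_subset _ hst

theorem sum_enorm_indicator_sq [DecidableEq Y] {s t : Finset Y} (hst : s ⊆ t) (c : Y → ℂ) :
    ∑ y ∈ t, ‖(s : Set Y).indicator c y‖ₑ ^ 2 = ∑ y ∈ s, ‖c y‖ₑ ^ 2 := by
  simp only [enorm_indicator_eq_indicator_enorm]
  rw [← sum_indicator_subset _ hst]
  refine sum_congr rfl fun y _ => ?_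
  by_cases hy : y ∈ (s : Set Y) <;> simp [hy]

theorem indicator_eq_sum_smul_single [DecidableEq Y] (s : Finset Y) (f : Y → ℂ) :
    (s : Set Y).indicator f = ∑ y ∈ s, f y • Pi.single y 1 := by
  funext x
  simp [Finset.sum_apply, Pi.single_apply, Set.indicator_apply]

theorem _root_.IsLinearMap.apply_indicator_eq_vecMulOn [DecidableEq Y] {T : (Y → ℂ) → Y → ℂ}
    (hT : IsLinearMap ℂ T)
    (s : Finset Y) (f : Y → ℂ) :
    T ((s : Set Y).indicator f) = vecMulOn s f fun y x => T (Pi.single y 1) x := by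
  funext x
  change IsLinearMap.mk' T hT ((s : Set Y).indicator f) x = _
  simp [indicator_eq_sum_smul_single, vecMulOn, Finset.sum_apply]

theorem L2BoundedBy.comp_equiv {W : Type*} {k : Y → Y → ℂ} {M : ℝ≥0∞} (hk : L2BoundedBy k M)
    (e : W ≃ Y) : L2BoundedBy (fun y x => k (e y) (e x)) M := by
  intro s c
  have hvec (x : W) : vecMulOn s c (fun y x => k (e y) (e x)) x =
      vecMulOn (s.map e.toEmbedding) (c ∘ e.symm) k (e x) := by
    simp [vecMulOn]
  simpa [hvec, e.tsum_eq (fun x => ‖vecMulOn (s.map e.toEmbedding) (c ∘ e.symm) k x‖ₑ ^ 2)]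
    using hk (s.map e.toEmbedding) (c ∘ e.symm)

theorem vecMulOn_kron_product {A B : Type*} (sA : Finset A) (sB : Finset B) (c : A × B → ℂ)
    (k : A → A → ℂ) (l : B → B → ℂ) (x : A × B) :
    vecMulOn (sA ×ˢ sB) c (kron k l) x =
      vecMulOn sB (fun b => vecMulOn sA (fun a => c (a, b)) k x.1) l x.2 := by
  simp only [vecMulOn, kron, sum_product, sum_mul]
  rw [sum_comm]
  exact sum_congr rfl fun b _ => sum_congr rfl fun a _ => by ring

theorem L2BoundedBy.kron {A B : Type*} {k : A → A → ℂ} {l : B → B → ℂ} {M N : ℝ≥0∞}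
    (hk : L2BoundedBy k M) (hl : L2BoundedBy l N) : L2BoundedBy (kron k l) (M * N) := by
  classical
  intro s c
  set sA := s.image Prod.fst
  set sB := s.image Prod.snd
  have hsub : s ⊆ sA ×ˢ sB := fun y hy =>
    mem_product.2 ⟨mem_image_of_mem _ hy, mem_image_of_mem _ hy⟩
  rw [← vecMulOn_indicator hsub, ← sum_enorm_indicator_sq hsub]
  set c' := (s : Set (A × B)).indicator c
  calc ∑' x, ‖vecMulOn (sA ×ˢ sB) c' (Interpolation.kron k l) x‖ₑ ^ 2
      = ∑' (x₁) (x₂), ‖vecMulOn sB (fun b => vecMulOn sA (fun a => c' (a, b)) k x₁) l x₂‖ₑ ^ 2 := by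
        simp_rw [vecMulOn_kron_product]
        exact ENNReal.tsum_prod (f := fun x₁ x₂ =>
          ‖vecMulOn sB (fun b => vecMulOn sA (fun a => c' (a, b)) k x₁) l x₂‖ₑ ^ 2)
    _ ≤ ∑' x₁, N ^ 2 * ∑ b ∈ sB, ‖vecMulOn sA (fun a => c' (a, b)) k x₁‖ₑ ^ 2 :=
        ENNReal.tsum_le_tsum fun x₁ => hl _ _
    _ = N ^ 2 * ∑ b ∈ sB, ∑' x₁, ‖vecMulOn sA (fun a => c' (a, b)) k x₁‖ₑ ^ 2 := by
        rw [ENNReal.tsum_mul_left, Summable.tsum_finsetSum fun _ _ => ENNReal.summable]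
    _ ≤ N ^ 2 * ∑ b ∈ sB, M ^ 2 * ∑ a ∈ sA, ‖c' (a, b)‖ₑ ^ 2 := by
        gcongr with b
        exact hk _ _
    _ = (M * N) ^ 2 * ∑ y ∈ sA ×ˢ sB, ‖c' y‖ₑ ^ 2 := by
        rw [sum_product_right, ← mul_sum, mul_pow]
        ring

theorem L2BoundedBy.tensorPow {k : Y → Y → ℂ} {M : ℝ≥0∞} (hk : L2BoundedBy k M) (n : ℕ) :
    L2BoundedBy (tensorPow k n) (M ^ n) := by
  induction n with
  | zero =>
    intro s c
    rcases s.eq_empty_or_nonempty with rfl | ⟨y₀, hy₀⟩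
    · simp [vecMulOn]
    obtain rfl : s = {y₀} := eq_singleton_iff_unique_mem.2 ⟨hy₀, fun _ _ => Subsingleton.elim _ _⟩
    simp [vecMulOn, Interpolation.tensorPow]
  | succ n ih =>
    have hcons : Interpolation.tensorPow k (n + 1) = fun y x =>
        Interpolation.kron k (Interpolation.tensorPow k n)
        ((Fin.consEquiv fun _ => Y).symm y) ((Fin.consEquiv fun _ => Y).symm x) := by
      funext y x
      simp [Interpolation.tensorPow, Interpolation.kron, Fin.prod_univ_succ, Fin.consEquiv,
        Fin.tail]
    rw [hcons, pow_succ']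
    exact (hk.kron ih).comp_equiv _

theorem EntriesLE.tensorPow {k : Y → Y → ℂ} {M : ℝ≥0∞} (hk : EntriesLE k M) (n : ℕ) :
    EntriesLE (tensorPow k n) (M ^ n) := by
  intro y x
  simpa [Interpolation.tensorPow, enorm_eq_nnnorm, nnnorm_prod] using
    prod_le_pow_card univ (fun i => ‖k (y i) (x i)‖ₑ) M fun i _ => hk _ _

theorem vecMulOn_tensorPow (s : Finset Y) (c : Y → ℂ) (k : Y → Y → ℂ) (n : ℕ) (x : Fin n → Y) :
    vecMulOn (Fintype.piFinset fun _ => s) (fun y => ∏ i, c (y i)) (tensorPow k n) x =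
      ∏ i, vecMulOn s c k (x i) := by
  simp only [vecMulOn, Interpolation.tensorPow, prod_univ_sum, ← prod_mul_distrib]

theorem eLpNorm_top_vecMulOn_le [MeasurableSpace Y] {μ : Measure Y} {k : Y → Y → ℂ} {M : ℝ≥0∞}
    (hk : EntriesLE k M) {u : Finset Y} {c : Y → ℂ} {D : ℝ≥0∞} (hc : ∀ y ∈ u, ‖c y‖ₑ ≤ D) :
    eLpNorm (vecMulOn u c k) ∞ μ ≤ M * (#u * D) := by
  rw [eLpNorm_exponent_top]
  refine eLpNormEssSup_le_of_ae_enorm_bound (.of_forall fun x => ?_)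
  calc ‖vecMulOn u c k x‖ₑ ≤ ∑ y ∈ u, ‖c y‖ₑ * ‖k y x‖ₑ := by
        simpa only [vecMulOn, enorm_mul] using enorm_sum_le u fun y => c y * k y x
    _ ≤ ∑ _y ∈ u, D * M := by gcongr with y hy; exacts [hc y hy, hk y x]
    _ = M * (#u * D) := by rw [sum_const, nsmul_eq_mul]; ring

theorem vecMulOn_eq_sum_dyadic {s : Finset Y} {c : Y → ℂ} {a : ℤ} {m : ℕ}
    (hc : ∀ y ∈ s, c y ≠ 0 → (2 : ℝ) ^ a ≤ ‖c y‖ ∧ ‖c y‖ < 2 ^ (a + m)) (k : Y → Y → ℂ) :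
    vecMulOn s c k =
      ∑ j ∈ Ico a (a + m), vecMulOn (s.filter fun y => c y ≠ 0 ∧ Int.log 2 ‖c y‖ = j) c k := by
  have hmaps : ∀ y ∈ s.filter (c · ≠ 0), Int.log 2 ‖c y‖ ∈ Ico a (a + m) := by
    intro y hy
    obtain ⟨hys, hy0⟩ := mem_filter.1 hy
    have hy' : 0 < ‖c y‖ := norm_pos_iff.2 hy0
    obtain ⟨hlow, hup⟩ := hc y hys hy0
    exact mem_Ico.2 ⟨(Int.zpow_le_iff_le_log one_lt_two hy').1 (by exact_mod_cast hlow),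
      (Int.lt_zpow_iff_log_lt one_lt_two hy').1 (by exact_mod_cast hup)⟩
  funext x
  simp only [vecMulOn, Finset.sum_apply, ← filter_filter]
  rw [sum_fiberwise_of_maps_to hmaps, sum_filter_of_ne fun y _ h => left_ne_zero_of_mul h]

end Kernel

section Interpolate

variable {Y : Type*} [MeasurableSpace Y] [MeasurableSingletonClass Y]

theorem L2BoundedBy.eLpNorm_vecMulOn_le {k : Y → Y → ℂ} {M : ℝ≥0∞} (hk : L2BoundedBy k M)
    {u : Finset Y} {c : Y → ℂ} {D : ℝ≥0∞} (hc : ∀ y ∈ u, ‖c y‖ₑ ≤ D) :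
    eLpNorm (vecMulOn u c k) 2 Measure.count ≤ M * ((#u : ℝ≥0∞) ^ (1 / 2 : ℝ) * D) := by
  have hsq : ((#u : ℝ≥0∞) ^ (1 / 2 : ℝ) * D) ^ 2 = #u * D ^ 2 := by
    rw [mul_pow, ← rpow_natCast ((#u : ℝ≥0∞) ^ (1 / 2 : ℝ)), ← ENNReal.rpow_mul]; norm_num
  rw [← ENNReal.pow_le_pow_left_iff two_ne_zero, eLpNorm_count_two_sq, mul_pow, hsq]
  calc _ ≤ M ^ 2 * ∑ y ∈ u, ‖c y‖ₑ ^ 2 := hk u c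
    _ ≤ M ^ 2 * ∑ _y ∈ u, D ^ 2 := by gcongr with y hy; exact hc y hy
    _ = M ^ 2 * (#u * D ^ 2) := by rw [sum_const, nsmul_eq_mul]

theorem eLpNorm_vecMulOn_le_of_flat {k : Y → Y → ℂ} {M₁ M₂ : ℝ≥0∞} (hk₁ : EntriesLE k M₁)
    (hk₂ : L2BoundedBy k M₂) {p q : ℝ} (hpq : p.HolderConjugate q) (hp2 : p ≤ 2)
    {u : Finset Y} {c : Y → ℂ} {B : ℝ≥0∞} (hc : ∀ y ∈ u, B ≤ ‖c y‖ₑ ∧ ‖c y‖ₑ ≤ 2 * B) :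
    eLpNorm (vecMulOn u c k) (.ofReal q) Measure.count ≤
      2 * (M₁ ^ (2 / p - 1) * M₂ ^ (2 - 2 / p)) * (∑ y ∈ u, ‖c y‖ₑ ^ p) ^ (1 / p) := by
  have hp1 : 1 < p := hpq.lt
  have ht : 0 ≤ 2 / p - 1 := by rw [sub_nonneg, le_div_iff₀ hpq.pos]; linarith
  have hu : 0 ≤ 2 - 2 / p := by rw [sub_nonneg, div_le_iff₀ hpq.pos]; linarith
  have hD (y) (hy : y ∈ u) : ‖c y‖ₑ ≤ 2 * B := (hc y hy).2
  calc eLpNorm (vecMulOn u c k) (.ofReal q) Measure.count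
      ≤ eLpNorm (vecMulOn u c k) ∞ Measure.count ^ (2 / p - 1) *
          eLpNorm (vecMulOn u c k) 2 Measure.count ^ (2 - 2 / p) := by
        have h := eLpNorm_count_le_top_rpow_mul_rpow (vecMulOn u c k) two_pos
          (hpq.two_le_of_le_two hp2)
        rwa [ofReal_ofNat, hpq.two_div_eq, show 1 - (2 - 2 / p) = 2 / p - 1 by ring] at h
    _ ≤ (M₁ * (#u * (2 * B))) ^ (2 / p - 1) *
          (M₂ * ((#u : ℝ≥0∞) ^ (1 / 2 : ℝ) * (2 * B))) ^ (2 - 2 / p) := by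
        gcongr
        exacts [eLpNorm_top_vecMulOn_le hk₁ hD, hk₂.eLpNorm_vecMulOn_le hD]
    _ = 2 * (M₁ ^ (2 / p - 1) * M₂ ^ (2 - 2 / p)) * ((#u : ℝ≥0∞) ^ (1 / p) * B) := by
        rw [rpow_mul_rpow_card_bounds hp1.le hp2]; ring
    _ ≤ _ := by gcongr; exact card_rpow_mul_le (fun y hy => (hc y hy).1) hpq.pos

theorem eLpNorm_vecMulOn_le_of_dyadic [Countable Y] {k : Y → Y → ℂ} {M₁ M₂ : ℝ≥0∞}
    (hk₁ : EntriesLE k M₁) (hk₂ : L2BoundedBy k M₂) {p q : ℝ} (hpq : p.HolderConjugate q)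
    (hp2 : p ≤ 2) {s : Finset Y} {c : Y → ℂ} {a : ℤ} {m : ℕ}
    (hc : ∀ y ∈ s, c y ≠ 0 → (2 : ℝ) ^ a ≤ ‖c y‖ ∧ ‖c y‖ < 2 ^ (a + m)) :
    eLpNorm (vecMulOn s c k) (.ofReal q) Measure.count ≤
      2 * m * (M₁ ^ (2 / p - 1) * M₂ ^ (2 - 2 / p)) * (∑ y ∈ s, ‖c y‖ₑ ^ p) ^ (1 / p) := by
  set L := M₁ ^ (2 / p - 1) * M₂ ^ (2 - 2 / p)
  set S := (∑ y ∈ s, ‖c y‖ₑ ^ p) ^ (1 / p)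
  have hlevel (j : ℤ) : eLpNorm (vecMulOn (s.filter fun y => c y ≠ 0 ∧ Int.log 2 ‖c y‖ = j) c k)
      (.ofReal q) Measure.count ≤ 2 * L * S := by
    refine (eLpNorm_vecMulOn_le_of_flat hk₁ hk₂ hpq hp2 (B := ENNReal.ofReal (2 ^ j))
      fun y hy => ?_).trans ?_
    · obtain ⟨-, hy0, rfl⟩ := mem_filter.1 hy
      exact enorm_mem_dyadic_level hy0
    · gcongr
      exact rpow_le_rpow (sum_le_sum_of_subset (filter_subset _ _)) hpq.one_div_nonneg
  calc eLpNorm (vecMulOn s c k) (.ofReal q) Measure.count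
      ≤ ∑ j ∈ Ico a (a + m), eLpNorm
          (vecMulOn (s.filter fun y => c y ≠ 0 ∧ Int.log 2 ‖c y‖ = j) c k) (.ofReal q)
          Measure.count := by
        rw [vecMulOn_eq_sum_dyadic hc k]
        exact eLpNorm_sum_le (fun _ _ => Measurable.of_discrete.aestronglyMeasurable)
          (one_le_ofReal.2 hpq.symm.lt.le)
    _ ≤ ∑ _j ∈ Ico a (a + m), 2 * L * S := sum_le_sum fun j _ => hlevel j
    _ = 2 * m * L * S := by
        rw [sum_const, Int.card_Ico, add_sub_cancel_left, Int.toNat_natCast, nsmul_eq_mul]; ring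

theorem eLpNorm_vecMulOn_le [Countable Y] {k : Y → Y → ℂ} {M₁ M₂ : ℝ≥0∞} (hk₁ : EntriesLE k M₁)
    (hk₂ : L2BoundedBy k M₂) {p q : ℝ} (hpq : p.HolderConjugate q) (hp2 : p ≤ 2)
    (s : Finset Y) (c : Y → ℂ) :
    eLpNorm (vecMulOn s c k) (.ofReal q) Measure.count ≤
      M₁ ^ (2 / p - 1) * M₂ ^ (2 - 2 / p) * (∑ y ∈ s, ‖c y‖ₑ ^ p) ^ (1 / p) := by
  obtain ⟨a, m, ham⟩ := exists_zpow_bounds s c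
  refine ENNReal.le_of_forall_pow_le_mul_nat_mul_pow (A := 2 * m) (by finiteness) fun n hn => ?_
  have hn0 : n ≠ 0 := Nat.one_le_iff_ne_zero.1 hn
  have hbounds (y : Fin n → Y) (hy : y ∈ Fintype.piFinset fun _ => s) (hy0 : ∏ i, c (y i) ≠ 0) :
      (2 : ℝ) ^ (n * a) ≤ ‖∏ i, c (y i)‖ ∧ ‖∏ i, c (y i)‖ < 2 ^ (n * a + (n * m : ℕ)) := by
    rw [norm_prod, show (n : ℤ) * a + (n * m : ℕ) = n * (a + m) by push_cast; ring]
    exact prod_mem_zpow_bounds hn0 fun i =>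
      ham _ (Fintype.mem_piFinset.1 hy i) (prod_ne_zero_iff.1 hy0 i (mem_univ i))
  have h := eLpNorm_vecMulOn_le_of_dyadic (hk₁.tensorPow n) (hk₂.tensorPow n) hpq hp2 hbounds
  rw [funext (vecMulOn_tensorPow s c k n), eLpNorm_count_pi_prod _ _ hpq.symm.pos,
    sum_piFinset_enorm_prod_rpow s c n hpq.pos, ENNReal.pow_rpow_comm, ENNReal.pow_rpow_comm]
    at h
  calc _ ≤ _ := h
    _ = _ := by push_cast; ring

end Interpolate

section Operator

variable {X : Type*} [MeasurableSpace X] [MeasurableSingletonClass X] {T : (X → ℂ) → X → ℂ}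

theorem entriesLE_of_eLpNorm_top_le [DecidableEq X] {M : ℝ≥0∞}
    (hT : ∀ f, eLpNorm (T f) ∞ Measure.count ≤ M * eLpNorm f 1 Measure.count) :
    EntriesLE (fun y x => T (Pi.single y 1) x) M := by
  intro y x
  have hsingle : eLpNorm (Pi.single y (1 : ℂ)) 1 Measure.count = 1 := by
    rw [← ofReal_one, eLpNorm_count_eq_tsum _ one_pos, tsum_eq_single y fun x hx => by simp [hx]]
    simp
  simpa [hsingle] using (enorm_le_eLpNorm_count _ x top_ne_zero).trans (hT (Pi.single y 1))

theorem l2BoundedBy_of_eLpNorm_two_le [DecidableEq X] (hT : IsLinearMap ℂ T) {M : ℝ≥0∞}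
    (hT₂ : ∀ f, eLpNorm (T f) 2 Measure.count ≤ M * eLpNorm f 2 Measure.count) :
    L2BoundedBy (fun y x => T (Pi.single y 1) x) M := by
  intro s c
  have hsum : ∑' x, ‖(s : Set X).indicator c x‖ₑ ^ 2 = ∑ y ∈ s, ‖c y‖ₑ ^ 2 := by
    rw [tsum_eq_sum (s := s) fun x hx => by simp [hx]]
    exact sum_enorm_indicator_sq subset_rfl c
  rw [← hT.apply_indicator_eq_vecMulOn, ← eLpNorm_count_two_sq, ← hsum,
    ← eLpNorm_count_two_sq, ← mul_pow]
  gcongr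
  exact hT₂ _

theorem _root_.IsLinearMap.eLpNorm_count_apply_indicator_le [Countable X] (hT : IsLinearMap ℂ T)
    {M₁ M₂ : ℝ≥0∞} (hT₁ : ∀ f, eLpNorm (T f) ∞ Measure.count ≤ M₁ * eLpNorm f 1 Measure.count)
    (hT₂ : ∀ f, eLpNorm (T f) 2 Measure.count ≤ M₂ * eLpNorm f 2 Measure.count)
    {p q : ℝ} (hpq : p.HolderConjugate q) (hp2 : p ≤ 2) (s : Finset X) (f : X → ℂ) :
    eLpNorm (T ((s : Set X).indicator f)) (.ofReal q) Measure.count ≤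
      M₁ ^ (2 / p - 1) * M₂ ^ (2 - 2 / p) * eLpNorm f (.ofReal p) Measure.count := by
  classical
  rw [hT.apply_indicator_eq_vecMulOn, eLpNorm_count_eq_tsum _ hpq.pos]
  refine (eLpNorm_vecMulOn_le (entriesLE_of_eLpNorm_top_le hT₁)
    (l2BoundedBy_of_eLpNorm_two_le hT hT₂) hpq hp2 s f).trans ?_
  gcongr
  exacts [hpq.one_div_nonneg, ENNReal.sum_le_tsum s]

theorem eLpNorm_count_apply_le_of_le_two_le {M : ℝ≥0∞}
    (hT : ∀ f, eLpNorm (T f) 2 Measure.count ≤ M * eLpNorm f 2 Measure.count)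
    {p q : ℝ≥0∞} (hp0 : p ≠ 0) (hp : p ≤ 2) (hq : 2 ≤ q) (f : X → ℂ) :
    eLpNorm (T f) q Measure.count ≤ M * eLpNorm f p Measure.count :=
  calc eLpNorm (T f) q Measure.count ≤ eLpNorm (T f) 2 Measure.count :=
        eLpNorm_count_le_of_exponent_le _ two_ne_zero hq
    _ ≤ M * eLpNorm f 2 Measure.count := hT f
    _ ≤ M * eLpNorm f p Measure.count := by gcongr; exact eLpNorm_count_le_of_exponent_le _ hp0 hp

theorem _root_.IsLinearMap.eLpNorm_count_apply_le_interpolate [Countable X]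
    (hT : IsLinearMap ℂ T) {M₁ M₂ : ℝ≥0∞} (hM₂ : M₂ ≠ ∞)
    (hT₁ : ∀ f, eLpNorm (T f) ∞ Measure.count ≤ M₁ * eLpNorm f 1 Measure.count)
    (hT₂ : ∀ f, eLpNorm (T f) 2 Measure.count ≤ M₂ * eLpNorm f 2 Measure.count)
    {p q : ℝ≥0∞} [p.HolderConjugate q] (hp2 : p ≤ 2) {f : X → ℂ}
    (hf : eLpNorm f p Measure.count ≠ ∞) :
    eLpNorm (T f) q Measure.count ≤
      M₁ ^ (2 / p.toReal - 1) * M₂ ^ (2 - 2 / p.toReal) * eLpNorm f p Measure.count := by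
  rcases (HolderConjugate.one_le p q).eq_or_lt with rfl | hp1
  · obtain rfl : q = ∞ := (HolderConjugate.eq_top_iff_eq_one q 1).2 rfl
    convert hT₁ f using 2
    norm_num
  have hp : p ≠ ∞ := (hp2.trans_lt ofNat_lt_top).ne
  have hq : q ≠ ∞ := ((HolderConjugate.lt_top_iff_one_lt q p).2 hp1).ne
  have hr : p.toReal.HolderConjugate q.toReal :=
    HolderConjugate.toReal (by simpa using toReal_strict_mono hp hp1)
  have hr2 : p.toReal ≤ 2 := by simpa using toReal_mono ofNat_ne_top hp2
  have h2q : 2 ≤ q := by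
    rw [← ofReal_toReal hq, ← ofReal_ofNat]
    exact ofReal_le_ofReal (hr.two_le_of_le_two hr2)
  set L := M₁ ^ (2 / p.toReal - 1) * M₂ ^ (2 - 2 / p.toReal)
  have hsplit (s : Finset X) : eLpNorm (T f) q Measure.count ≤
      L * eLpNorm f p Measure.count + M₂ * eLpNorm ((s : Set X)ᶜ.indicator f) p Measure.count := by
    rw [← Set.indicator_self_add_compl (s : Set X) f, hT.map_add]
    refine (eLpNorm_add_le Measurable.of_discrete.aestronglyMeasurable
      Measurable.of_discrete.aestronglyMeasurable (HolderConjugate.one_le q p)).trans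
      (add_le_add ?_ ?_) <;> rw [Set.indicator_self_add_compl]
    · rw [← ofReal_toReal hq, ← ofReal_toReal hp]
      exact hT.eLpNorm_count_apply_indicator_le hT₁ hT₂ hr hr2 s f
    · exact eLpNorm_count_apply_le_of_le_two_le hT₂ (HolderConjugate.ne_zero p q) hp2 h2q _
  have hlim := (ENNReal.Tendsto.const_mul
    (tendsto_eLpNorm_count_indicator_compl (HolderConjugate.ne_zero p q) hp hf)
    (Or.inr hM₂)).const_add (L * eLpNorm f p Measure.count)
  simpa using ge_of_tendsto' hlim hsplit

theorem _root_.IsLinearMap.eLpNorm_count_apply_le_of_rpow_bounds [Countable X]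
    (hT : IsLinearMap ℂ T)
    {K lam a b : ℝ} (hK : 0 ≤ K) (hlam : 0 < lam)
    (hT₁ : ∀ f, eLpNorm (T f) ∞ Measure.count ≤
      ENNReal.ofReal (K * lam ^ (-a)) * eLpNorm f 1 Measure.count)
    (hT₂ : ∀ f, eLpNorm (T f) 2 Measure.count ≤
      ENNReal.ofReal (K * lam ^ (-b)) * eLpNorm f 2 Measure.count)
    {p q : ℝ≥0∞} [p.HolderConjugate q] (hp2 : p ≤ 2) {f : X → ℂ}
    (hf : eLpNorm f p Measure.count ≠ ∞) :
    eLpNorm (T f) q Measure.count ≤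
      ENNReal.ofReal (K * lam ^ (-(a * (2 / p.toReal - 1) + b * (2 - 2 / p.toReal)))) *
        eLpNorm f p Measure.count := by
  have hp : p ≠ ∞ := (hp2.trans_lt ofNat_lt_top).ne
  have hp1 : 1 ≤ p.toReal := by simpa using toReal_mono hp (HolderConjugate.one_le p q)
  have hp2' : p.toReal ≤ 2 := by simpa using toReal_mono ofNat_ne_top hp2
  have ht : 0 ≤ 2 / p.toReal - 1 := by rw [sub_nonneg, le_div_iff₀ (by linarith)]; linarith
  have hu : 0 ≤ 2 - 2 / p.toReal := by rw [sub_nonneg, div_le_iff₀ (by linarith)]; linarith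
  rw [← ofReal_mul_rpow_neg_rpow_mul_rpow hK hlam ht hu (by ring)]
  exact hT.eLpNorm_count_apply_le_interpolate ofReal_ne_top hT₁ hT₂ hp2 hf

end Operator

section Decomposition

variable {X : Type*} [MeasurableSpace X] [MeasurableSingletonClass X] [Countable X]
  {A M E : (X → ℂ) → X → ℂ}

theorem eLpNorm_two_le_of_add_eq (hsum : ∀ f x, A f x = M f x + E f x) {C lam γ : ℝ}
    (hC : 0 ≤ C) (hγ : 0 ≤ γ) (hlam : 1 ≤ lam)
    (hA : ∀ f, eLpNorm (A f) 2 Measure.count ≤ ENNReal.ofReal C * eLpNorm f 2 Measure.count)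
    (hE : ∀ f, eLpNorm (E f) 2 Measure.count ≤
      ENNReal.ofReal (C * lam ^ (-γ)) * eLpNorm f 2 Measure.count) (f : X → ℂ) :
    eLpNorm (M f) 2 Measure.count ≤
      ENNReal.ofReal (2 * C * lam ^ (-(0 : ℝ))) * eLpNorm f 2 Measure.count := by
  have hγ1 : lam ^ (-γ) ≤ 1 := Real.rpow_le_one_of_one_le_of_nonpos hlam (by linarith)
  rw [show M f = A f - E f from funext fun x => by simp [hsum]]
  refine (eLpNorm_sub_le_ofReal_add_mul Measurable.of_discrete.aestronglyMeasurable
    Measurable.of_discrete.aestronglyMeasurable one_le_two hC (by positivity)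
    (by simpa using hA f) (hE f)).trans ?_
  gcongr
  simp only [neg_zero, Real.rpow_zero]
  nlinarith

theorem eLpNorm_top_le_of_add_eq (hsum : ∀ f x, A f x = M f x + E f x) {C lam α β : ℝ}
    (hC : 0 ≤ C) (hαβ : α ≤ β) (hlam : 1 ≤ lam)
    (hA : ∀ f, eLpNorm (A f) ∞ Measure.count ≤
      ENNReal.ofReal (C * lam ^ (-α)) * eLpNorm f 1 Measure.count)
    (hM : ∀ f, eLpNorm (M f) ∞ Measure.count ≤
      ENNReal.ofReal (C * lam ^ (-β)) * eLpNorm f 1 Measure.count) (f : X → ℂ) :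
    eLpNorm (E f) ∞ Measure.count ≤
      ENNReal.ofReal (2 * C * lam ^ (-α)) * eLpNorm f 1 Measure.count := by
  have hβα : lam ^ (-β) ≤ lam ^ (-α) := Real.rpow_le_rpow_of_exponent_le hlam (by linarith)
  rw [show E f = A f - M f from funext fun x => by simp [hsum]]
  refine (eLpNorm_sub_le_ofReal_add_mul Measurable.of_discrete.aestronglyMeasurable
    Measurable.of_discrete.aestronglyMeasurable le_top (by positivity) (by positivity)
    (hA f) (hM f)).trans ?_
  gcongr
  nlinarith

theorem eLpNorm_count_le_of_add_of_rpow_bounds (hM : IsLinearMap ℂ M) (hE : IsLinearMap ℂ E)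
    (hsum : ∀ f x, A f x = M f x + E f x) {K lam a₁ b₁ a₂ b₂ : ℝ} (hK : 0 < K) (hlam : 0 < lam)
    (hM₁ : ∀ f, eLpNorm (M f) ∞ Measure.count ≤
      ENNReal.ofReal (K * lam ^ (-a₁)) * eLpNorm f 1 Measure.count)
    (hM₂ : ∀ f, eLpNorm (M f) 2 Measure.count ≤
      ENNReal.ofReal (K * lam ^ (-b₁)) * eLpNorm f 2 Measure.count)
    (hE₁ : ∀ f, eLpNorm (E f) ∞ Measure.count ≤
      ENNReal.ofReal (K * lam ^ (-a₂)) * eLpNorm f 1 Measure.count)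
    (hE₂ : ∀ f, eLpNorm (E f) 2 Measure.count ≤
      ENNReal.ofReal (K * lam ^ (-b₂)) * eLpNorm f 2 Measure.count)
    {p q : ℝ≥0∞} [p.HolderConjugate q] (hp2 : p ≤ 2) (f : X → ℂ) :
    eLpNorm (A f) q Measure.count ≤
      ENNReal.ofReal (K * (lam ^ (-(a₁ * (2 / p.toReal - 1) + b₁ * (2 - 2 / p.toReal))) +
        lam ^ (-(a₂ * (2 / p.toReal - 1) + b₂ * (2 - 2 / p.toReal))))) *
        eLpNorm f p Measure.count := by
  rcases eq_or_ne (eLpNorm f p Measure.count) ∞ with hf | hf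
  · rw [hf, mul_top (by positivity)]
    exact le_top
  rw [mul_add, ofReal_add (by positivity) (by positivity), add_mul,
    show A f = M f + E f from funext (hsum f)]
  exact (eLpNorm_add_le Measurable.of_discrete.aestronglyMeasurable
    Measurable.of_discrete.aestronglyMeasurable (HolderConjugate.one_le q p)).trans
    (add_le_add (hM.eLpNorm_count_apply_le_of_rpow_bounds hK.le hlam hM₁ hM₂ hp2 hf)
      (hE.eLpNorm_count_apply_le_of_rpow_bounds hK.le hlam hE₁ hE₂ hp2 hf))

end Decomposition

end Interpolation

theorem interpolation_proposition_general (d : ℕ)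
    (A M E : ℝ → ((Fin d → ℤ) → ℂ) → ((Fin d → ℤ) → ℂ))
    (hM_lin : ∀ lam, IsLinearMap ℂ (M lam))
    (hE_lin : ∀ lam, IsLinearMap ℂ (E lam))
    (hsum : ∀ lam f x, A lam f x = M lam f x + E lam f x)
    (C α β γ : ℝ) (hC : 0 < C) (hγ : 0 < γ)
    (hi : ∀ lam ≥ (1 : ℝ), ∀ f, eLpNorm (A lam f) ⊤ Measure.count ≤
      ENNReal.ofReal (C * lam ^ (-α)) * eLpNorm f 1 Measure.count)
    (hii : ∀ lam ≥ (1 : ℝ), ∀ f, eLpNorm (M lam f) ⊤ Measure.count ≤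
      ENNReal.ofReal (C * lam ^ (-β)) * eLpNorm f 1 Measure.count)
    (hiii : ∀ lam ≥ (1 : ℝ), ∀ f, eLpNorm (A lam f) 2 Measure.count ≤
      ENNReal.ofReal C * eLpNorm f 2 Measure.count)
    (hiv : ∀ lam ≥ (1 : ℝ), ∀ f, eLpNorm (E lam f) 2 Measure.count ≤
      ENNReal.ofReal (C * lam ^ (-γ)) * eLpNorm f 2 Measure.count)
    (hαβ : α < β) :
    ∃ C' > (0 : ℝ), ∀ lam ≥ (1 : ℝ), ∀ p p' : ℝ≥0∞, 1 ≤ p → p ≤ 2 →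
      1 / p + 1 / p' = 1 → ∀ f,
      eLpNorm (A lam f) p' Measure.count ≤
        ENNReal.ofReal (C' * (lam ^ (-(β * (2 / p.toReal - 1))) +
          lam ^ (-(α * (2 / p.toReal - 1) + γ * (2 - 2 / p.toReal))))) *
          eLpNorm f p Measure.count := by
  refine ⟨2 * C, by positivity, fun lam hlam p p' _ hp2 hpp' f => ?_⟩
  have : p.HolderConjugate p' := holderConjugate_iff.2 (by simpa only [one_div] using hpp')
  have hlam0 : 0 < lam := by linarith
  have h2C (x : ℝ) : ENNReal.ofReal (C * lam ^ x) ≤ ENNReal.ofReal (2 * C * lam ^ x) :=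
    ofReal_le_ofReal (by nlinarith [Real.rpow_pos_of_pos hlam0 x])
  have hM₁ (g) : eLpNorm (M lam g) ⊤ Measure.count ≤
      ENNReal.ofReal (2 * C * lam ^ (-β)) * eLpNorm g 1 Measure.count :=
    (hii lam hlam g).trans (mul_le_mul_left (h2C _) _)
  have hE₂ (g) : eLpNorm (E lam g) 2 Measure.count ≤
      ENNReal.ofReal (2 * C * lam ^ (-γ)) * eLpNorm g 2 Measure.count :=
    (hiv lam hlam g).trans (mul_le_mul_left (h2C _) _)
  have hM₂ := Interpolation.eLpNorm_two_le_of_add_eq (hsum lam) hC.le hγ.le hlam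
    (hiii lam hlam) (hiv lam hlam)
  have hE₁ := Interpolation.eLpNorm_top_le_of_add_eq (hsum lam) hC.le hαβ.le hlam
    (hi lam hlam) (hii lam hlam)
  simpa using Interpolation.eLpNorm_count_le_of_add_of_rpow_bounds (hM_lin lam) (hE_lin lam)
    (hsum lam) (by positivity) hlam0 hM₁ hM₂ hE₁ hE₂ hp2 f

/-- the interpolation proposition (Proposition 1 of the paper).
If `A_λ = M_λ + E_λ` with the four endpoint bounds (i)–(iv) uniform in `λ ≥ 1`
and `α < β`, then for `1 ≤ p ≤ 2` one has the `ℓ^p → ℓ^{p'}` bound with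
constant `C'` independent of `λ`. -/
theorem interpolation_proposition (d : ℕ)
    (A M E : ℝ → ((Fin d → ℤ) → ℂ) → ((Fin d → ℤ) → ℂ))
    (hA_lin : ∀ lam, IsLinearMap ℂ (A lam))
    (hM_lin : ∀ lam, IsLinearMap ℂ (M lam))
    (hE_lin : ∀ lam, IsLinearMap ℂ (E lam))
    (hsum : ∀ lam f x, A lam f x = M lam f x + E lam f x)
    (C α β γ : ℝ) (hC : 0 < C) (hα : 0 < α) (hβ : 0 < β) (hγ : 0 < γ)
    (hi : ∀ lam ≥ (1 : ℝ), ∀ f, eLpNorm (A lam f) ⊤ Measure.count ≤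
      ENNReal.ofReal (C * lam ^ (-α)) * eLpNorm f 1 Measure.count)
    (hii : ∀ lam ≥ (1 : ℝ), ∀ f, eLpNorm (M lam f) ⊤ Measure.count ≤
      ENNReal.ofReal (C * lam ^ (-β)) * eLpNorm f 1 Measure.count)
    (hiii : ∀ lam ≥ (1 : ℝ), ∀ f, eLpNorm (A lam f) 2 Measure.count ≤
      ENNReal.ofReal C * eLpNorm f 2 Measure.count)
    (hiv : ∀ lam ≥ (1 : ℝ), ∀ f, eLpNorm (E lam f) 2 Measure.count ≤
      ENNReal.ofReal (C * lam ^ (-γ)) * eLpNorm f 2 Measure.count)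
    (hαβ : α < β) :
    ∃ C' > (0 : ℝ), ∀ lam ≥ (1 : ℝ), ∀ p p' : ℝ≥0∞, 1 ≤ p → p ≤ 2 →
      1 / p + 1 / p' = 1 → ∀ f,
      eLpNorm (A lam f) p' Measure.count ≤
        ENNReal.ofReal (C' * (lam ^ (-(β * (2 / p.toReal - 1))) +
          lam ^ (-(α * (2 / p.toReal - 1) + γ * (2 - 2 / p.toReal))))) *
          eLpNorm f p Measure.count :=
  interpolation_proposition_general d A M E hM_lin hE_lin hsum C α β γ hC hγ hi hii hiii hiv hαβ
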